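/- arXiv:1503.03654 — 3 statements merged into one kernel-verified Lean document; each statement's English description precedes it below -/
import Mathlib

section
/- For real sequences (α_j) and (β_k) with β_k ≠ α_j for all j,k ≤ N and pairwise distinct α's and β's, the determinant of the N×N matrix with entries 1/(β_k - α_j) equals (∏_{j<k} (β_k - β_j)(α_j - α_k)) / (∏_{j,k} (β_k - α_j)). -/
open Finset

private lemma prod_pairs_Ioi {N : ℕ} (f : Fin N → Fin N → ℝ) :
    ∏ p ∈ Finset.univ.filter (fun p : Fin N × Fin N => p.1 < p.2), f p.1 p.2
      = ∏ j, ∏ m ∈ Ioi j, f j m := by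
  rw [Finset.prod_filter,
    Fintype.prod_prod_type (f := fun p : Fin N × Fin N => if p.1 < p.2 then f p.1 p.2 else 1)]
  congr 1; ext j
  rw [← Finset.filter_lt_eq_Ioi, Finset.prod_filter]

private lemma prod_pairs_Iio {N : ℕ} (f : Fin N → Fin N → ℝ) :
    ∏ p ∈ Finset.univ.filter (fun p : Fin N × Fin N => p.1 < p.2), f p.1 p.2
      = ∏ j, ∏ m ∈ Iio j, f m j := by
  rw [prod_pairs_Ioi, Finset.prod_sigma', Finset.prod_sigma']
  apply Finset.prod_nbij' (fun x => ⟨x.2, x.1⟩) (fun x => ⟨x.2, x.1⟩) <;>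
    simp [Finset.mem_sigma]

private lemma prod_erase_split {N : ℕ} (f : Fin N → Fin N → ℝ) (j : Fin N) :
    ∏ m ∈ Finset.univ.erase j, f j m = (∏ m ∈ Iio j, f j m) * (∏ m ∈ Ioi j, f j m) := by
  rw [← Finset.prod_union]
  · congr 1
    ext m
    simp only [Finset.mem_erase, Finset.mem_univ, and_true, Finset.mem_union,
      Finset.mem_Iio, Finset.mem_Ioi]
    exact ⟨fun h => h.lt_or_gt, fun h => h.elim ne_of_lt ne_of_gt⟩
  · exact (Finset.disjoint_Ioi_Iio j).symm

/-- **Cauchy determinant formula.** -/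
theorem cauchy_determinant (N : ℕ) (α β : Fin N → ℝ)
    (hαβ : ∀ j k : Fin N, β k ≠ α j)
    (hα : Function.Injective α) (hβ : Function.Injective β) :
    Matrix.det (Matrix.of fun j k : Fin N => 1 / (β k - α j)) =
      (∏ p ∈ Finset.univ.filter (fun p : Fin N × Fin N => p.1 < p.2),
        (β p.2 - β p.1) * (α p.1 - α p.2)) /
      ∏ j : Fin N, ∏ k : Fin N, (β k - α j) := by
  classical
  have hne : ∀ j k : Fin N, β k - α j ≠ 0 := fun j k => sub_ne_zero.2 (hαβ j k)
  set p : Fin N → Polynomial ℝ := fun j => ∏ m ∈ Finset.univ.erase j, (Polynomial.X - Polynomial.C (α m)) with hp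
  have hdeg : ∀ j, (p j).natDegree < N := by
    intro j
    rw [hp]
    rw [Polynomial.natDegree_prod _ _ (fun m _ => Polynomial.X_sub_C_ne_zero (α m))]
    simp only [Polynomial.natDegree_X_sub_C, Finset.sum_const, smul_eq_mul, mul_one]
    rw [Finset.card_erase_of_mem (Finset.mem_univ j), Finset.card_univ, Fintype.card_fin]
    exact Nat.sub_lt j.pos Nat.one_pos
  set Q : Matrix (Fin N) (Fin N) ℝ := Matrix.of fun j i => (p j).coeff i with hQ
  have heval : ∀ (j : Fin N) (x : ℝ), (p j).eval x = ∏ m ∈ Finset.univ.erase j, (x - α m) := by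
    intro j x
    rw [hp]
    simp [Polynomial.eval_prod]
  have hM : ∀ (V : Fin N → ℝ) (j k : Fin N),
      (Q * (Matrix.vandermonde V).transpose) j k = ∏ m ∈ Finset.univ.erase j, (V k - α m) := by
    intro V j k
    rw [← heval j (V k), Polynomial.eval_eq_sum_range' (hdeg j)]
    rw [Matrix.mul_apply]
    rw [← Fin.sum_univ_eq_sum_range fun i => (p j).coeff i * V k ^ i]
    simp [hQ, Matrix.vandermonde]
  -- Q * V(α)^T is diagonal
  have hdiagQ : Q * (Matrix.vandermonde α).transpose
      = Matrix.diagonal (fun j => ∏ m ∈ Finset.univ.erase j, (α j - α m)) := by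
    ext j k
    rw [hM α j k]
    rcases eq_or_ne j k with rfl | h
    · simp [Matrix.diagonal]
    · rw [Matrix.diagonal_apply_ne _ h]
      exact Finset.prod_eq_zero (Finset.mem_erase.2 ⟨fun hk => h (hk ▸ rfl), Finset.mem_univ k⟩)
        (by simp)
  -- Cauchy matrix relation
  set Cm : Matrix (Fin N) (Fin N) ℝ := Matrix.of fun j k : Fin N => 1 / (β k - α j) with hCm
  set d : Fin N → ℝ := fun k => ∏ j, (β k - α j) with hd
  have hMC : Q * (Matrix.vandermonde β).transpose = Cm * Matrix.diagonal d := by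
    ext j k
    rw [hM β j k, Matrix.mul_diagonal]
    rw [hCm, hd]
    simp only [Matrix.of_apply]
    rw [← Finset.mul_prod_erase Finset.univ _ (Finset.mem_univ j)]
    rw [one_div, ← mul_assoc, inv_mul_cancel₀ (hne j k), one_mul]
  have hdet1 : Cm.det * ∏ k, d k = Q.det * (Matrix.vandermonde β).det := by
    rw [← Matrix.det_diagonal, ← Matrix.det_mul, ← hMC, Matrix.det_mul,
      Matrix.det_transpose]
  have hdet2 : Q.det * (Matrix.vandermonde α).det
      = ∏ j, ∏ m ∈ Finset.univ.erase j, (α j - α m) := by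
    have h := congrArg Matrix.det hdiagQ
    rw [Matrix.det_mul, Matrix.det_transpose, Matrix.det_diagonal] at h
    exact h
  set S := Finset.univ.filter (fun p : Fin N × Fin N => p.1 < p.2) with hS
  have hVβ : (Matrix.vandermonde β).det = ∏ p ∈ S, (β p.2 - β p.1) := by
    rw [Matrix.det_vandermonde, ← prod_pairs_Ioi]
  have hVα : (Matrix.vandermonde α).det = ∏ p ∈ S, (α p.2 - α p.1) := by
    rw [Matrix.det_vandermonde, ← prod_pairs_Ioi]
  have hDα : ∏ j, ∏ m ∈ Finset.univ.erase j, (α j - α m)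
      = (∏ p ∈ S, (α p.2 - α p.1)) * ∏ p ∈ S, (α p.1 - α p.2) := by
    calc ∏ j, ∏ m ∈ Finset.univ.erase j, (α j - α m)
        = ∏ j, ((∏ m ∈ Iio j, (α j - α m)) * ∏ m ∈ Ioi j, (α j - α m)) :=
          Finset.prod_congr rfl fun j _ => prod_erase_split (fun j m => α j - α m) j
      _ = (∏ j, ∏ m ∈ Iio j, (α j - α m)) * ∏ j, ∏ m ∈ Ioi j, (α j - α m) :=
          Finset.prod_mul_distrib
      _ = (∏ p ∈ S, (α p.2 - α p.1)) * ∏ p ∈ S, (α p.1 - α p.2) := by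
          rw [← prod_pairs_Ioi fun j m => α j - α m,
            ← prod_pairs_Iio fun m j => α j - α m]
  have hVα_ne : (Matrix.vandermonde α).det ≠ 0 := by
    rw [hVα]
    exact Finset.prod_ne_zero_iff.2 fun q hq =>
      sub_ne_zero.2 fun h => absurd (hα h) (ne_of_gt (Finset.mem_filter.1 hq).2)
  have hQdet : Q.det = ∏ p ∈ S, (α p.1 - α p.2) := by
    have h := hdet2
    rw [hDα, hVα, mul_comm ((∏ p ∈ S, (α p.2 - α p.1)))] at h
    exact mul_right_cancel₀ (hVα ▸ hVα_ne) h
  have hDne : (∏ k, d k) ≠ 0 := Finset.prod_ne_zero_iff.2 fun k _ =>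
    Finset.prod_ne_zero_iff.2 fun j _ => hne j k
  have hfin : Cm.det * ∏ k, d k
      = ∏ p ∈ S, (β p.2 - β p.1) * (α p.1 - α p.2) := by
    rw [hdet1, hQdet, hVβ, Finset.prod_mul_distrib, mul_comm]
  have hcomm : ∏ j : Fin N, ∏ k : Fin N, (β k - α j) = ∏ k, d k := by
    rw [hd]; exact Finset.prod_comm
  show Cm.det = _
  rw [hcomm, eq_div_iff hDne, hfin]
end

section
/- With A, B = A + |φ⟩⟨φ| as above, for z in ρ(A) ∩ ρ(B) the resolvents satisfy (A − z)^{-1} φ = (1 − ⟨(B − z̄)^{-1} φ, φ⟩)^{-1} (B − z)^{-1} φ, and consequently (⟨φ, (B − z)^{-1} φ⟩ − 1)(⟨φ, (A − z)^{-1} φ⟩ + 1) = −1. -/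
open scoped ComplexInnerProductSpace

/-- Resolvent identities for a rank-one perturbation:
`(A − z)⁻¹ φ = (1 − ⟨(B − z̄)⁻¹ φ, φ⟩)⁻¹ (B − z)⁻¹ φ` and
`(⟨φ,(B − z)⁻¹φ⟩ − 1)(⟨φ,(A − z)⁻¹φ⟩ + 1) = −1`. -/
theorem rank_one_resolvent_identities {H : Type*} [NormedAddCommGroup H]
    [InnerProductSpace ℂ H] [CompleteSpace H]
    (A B : H →L[ℂ] H) (hAsa : IsSelfAdjoint A)
    (φ : H) (hφ : φ ≠ 0)
    (hB : ∀ x : H, B x = A x + ⟪φ, x⟫ • φ)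
    (z : ℂ) (hzA : z ∈ resolventSet ℂ A) (hzB : z ∈ resolventSet ℂ B) :
    Ring.inverse (A - z • (1 : H →L[ℂ] H)) φ =
      (1 - ⟪Ring.inverse (B - (starRingEnd ℂ z) • (1 : H →L[ℂ] H)) φ, φ⟫)⁻¹ •
        Ring.inverse (B - z • (1 : H →L[ℂ] H)) φ ∧
    (⟪φ, Ring.inverse (B - z • (1 : H →L[ℂ] H)) φ⟫ - 1) *
      (⟪φ, Ring.inverse (A - z • (1 : H →L[ℂ] H)) φ⟫ + 1) = -1 := by
  have hA : IsUnit (A - z • (1 : H →L[ℂ] H)) := by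
    rw [resolventSet, Set.mem_setOf_eq, Algebra.algebraMap_eq_smul_one] at hzA
    simpa using hzA.neg
  have hBu : IsUnit (B - z • (1 : H →L[ℂ] H)) := by
    rw [resolventSet, Set.mem_setOf_eq, Algebra.algebraMap_eq_smul_one] at hzB
    simpa using hzB.neg
  set T := A - z • (1 : H →L[ℂ] H) with hT
  set S := B - z • (1 : H →L[ℂ] H) with hS
  set x := Ring.inverse T φ with hx
  set y := Ring.inverse S φ with hy
  have hTx : T x = φ := by
    have := congrArg (fun f : H →L[ℂ] H => f φ) (Ring.mul_inverse_cancel T hA)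
    simpa [ContinuousLinearMap.mul_apply] using this
  have hSy : S y = φ := by
    have := congrArg (fun f : H →L[ℂ] H => f φ) (Ring.mul_inverse_cancel S hBu)
    simpa [ContinuousLinearMap.mul_apply] using this
  set a := ⟪φ, x⟫ with ha
  set b := ⟪φ, y⟫ with hb
  have hTy : T y = (1 - b) • φ := by
    have h1 : T y = S y - b • φ := by
      simp only [hT, hS, ContinuousLinearMap.sub_apply, ContinuousLinearMap.smul_apply,
        ContinuousLinearMap.one_apply, hB y, hb]
      abel
    rw [h1, hSy, sub_smul, one_smul]
  have hinj : ∀ u v : H, T u = T v → u = v := by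
    intro u v huv
    have h1 := congrArg (fun f : H →L[ℂ] H => f u) (Ring.inverse_mul_cancel T hA)
    have h2 := congrArg (fun f : H →L[ℂ] H => f v) (Ring.inverse_mul_cancel T hA)
    simp only [ContinuousLinearMap.mul_apply, ContinuousLinearMap.one_apply] at h1 h2
    rw [← h1, ← h2, huv]
  have hyx : y = (1 - b) • x := by
    apply hinj
    rw [map_smul, hTx, hTy]
  have hbrel : b = (1 - b) * a := by
    have h2 := congrArg (fun w => (⟪φ, w⟫ : ℂ)) hyx
    simp only [inner_smul_right] at h2
    exact h2
  have hb1 : b ≠ 1 := by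
    intro h
    have hy0 : y = 0 := by rw [hyx, h, sub_self, zero_smul]
    exact hφ (by rw [← hSy, hy0, map_zero])
  have hBsa : IsSelfAdjoint B := by
    rw [ContinuousLinearMap.isSelfAdjoint_iff_isSymmetric]
    intro u v
    simp only [ContinuousLinearMap.coe_coe, hB]
    have hAsym : (⟪A u, v⟫ : ℂ) = ⟪u, A v⟫ := hAsa.isSymmetric u v
    rw [inner_add_left, inner_add_right, inner_smul_left, inner_smul_right, hAsym]
    rw [inner_conj_symm]
    ring
  have hstar : B - (starRingEnd ℂ z) • (1 : H →L[ℂ] H) = star S := by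
    rw [hS, star_sub, star_smul, hBsa.star_eq, star_one]
    rfl
  have hinner : ⟪Ring.inverse (B - (starRingEnd ℂ z) • (1 : H →L[ℂ] H)) φ, φ⟫ = b := by
    rw [hstar, Ring.inverse_star, ContinuousLinearMap.star_eq_adjoint,
      ContinuousLinearMap.adjoint_inner_left, ← hy, ← hb]
  constructor
  · rw [hinner, hyx, smul_smul, inv_mul_cancel₀ (sub_ne_zero.mpr fun h => hb1 h.symm), one_smul]
  · linear_combination hbrel
end

section
/- Let λ_n = (nπ/L)² and let μ_n ≥ 0 satisfy √μ_n = √λ_n − δ_α(√μ_n)/L, where δ_α is bounded with bounded derivative on (0,∞). Then δ_α(√μ_n) = δ_α(√λ_n) − δ_α'(√λ_n) δ_α(√λ_n)/L + o(1/L) as L → ∞, uniformly in n with √λ_n bounded away from 0. -/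
/-- The s-wave scattering phase shift of the Dirac-δ perturbation of
strength `α`, as in Definition `delta:def:phase`. -/
noncomputable def phaseShift (α k : ℝ) : ℝ :=
  if 0 < α then Real.arctan (k / (4 * Real.pi * α))
  else if α = 0 then Real.pi / 2
  else Real.pi - Real.arctan (k / (4 * Real.pi * |α|))

/-!
In every case `δ_α k = a + s * arctan (c * k)`, so `δ_α` is bounded, Lipschitz, and has a
Lipschitz derivative. The root equation gives `|√μ - k| ≤ ‖δ_α‖∞ / L` for `k = nπ/L`. A first-order
Taylor expansion at `k` then yields `δ_α(√μ) = δ_α(k) - δ_α'(k) δ_α(√μ) / L + O(1/L²)`, and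
replacing `δ_α(√μ)` by `δ_α(k)` in the correction term costs another `O(1/L²)`. The error is
therefore `O(1/L²)` uniformly in `k`, in particular `o(1/L)`.
-/

open Real Set
open scoped NNReal Interval

section FixedPointExpansion

variable {f f' : ℝ → ℝ} {K₁ K : ℝ≥0} {B : ℝ}

theorem abs_sub_sub_mul_sub_le_of_lipschitzWith (hf : ∀ x, HasDerivAt f (f' x) x)
    (hf' : LipschitzWith K f') (x y : ℝ) :
    |f y - f x - f' x * (y - x)| ≤ K * (y - x) ^ 2 := by
  have hderiv : ∀ z ∈ [[x, y]],
      HasDerivWithinAt (fun z => f z - z * f' x) (f' z - f' x) [[x, y]] z := fun z _ =>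
    ((hf z).sub (hasDerivAt_mul_const (f' x))).hasDerivWithinAt
  have hbound : ∀ z ∈ [[x, y]], ‖f' z - f' x‖ ≤ K * |y - x| := fun z hz => by
    rw [Real.norm_eq_abs, ← Real.dist_eq]
    exact (hf'.dist_le_mul z x).trans
      (mul_le_mul_of_nonneg_left (abs_sub_left_of_mem_uIcc hz) K.2)
  have := Convex.norm_image_sub_le_of_norm_hasDerivWithin_le hderiv hbound (convex_uIcc x y)
    left_mem_uIcc right_mem_uIcc
  rw [Real.norm_eq_abs, Real.norm_eq_abs] at this
  calc |f y - f x - f' x * (y - x)| = |f y - y * f' x - (f x - x * f' x)| := by ring_nf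
    _ ≤ K * |y - x| * |y - x| := this
    _ = K * (y - x) ^ 2 := by rw [mul_assoc, abs_mul_abs_self, sq]

theorem abs_expansion_le_of_eq_sub_div (hf : ∀ x, HasDerivAt f (f' x) x)
    (hfK₁ : LipschitzWith K₁ f) (hf' : LipschitzWith K f') (hB : ∀ x, |f x| ≤ B)
    {L k m : ℝ} (hL : 0 < L) (hm : m = k - f m / L) :
    |f m - (f k - f' k * f k / L)| ≤ (K₁ ^ 2 * B + K * B ^ 2) / L ^ 2 := by
  have hmk : |m - k| ≤ B / L := by
    rw [hm, sub_sub_cancel_left, abs_neg, abs_div, abs_of_pos hL]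
    exact div_le_div_of_nonneg_right (hB m) hL.le
  have htaylor : |f m - f k - f' k * (m - k)| ≤ K * (B / L) ^ 2 :=
    (abs_sub_sub_mul_sub_le_of_lipschitzWith hf hf' k m).trans <| by
      rw [← sq_abs]
      gcongr
  have hcorrection : |f' k * ((f k - f m) / L)| ≤ K₁ * (K₁ * (B / L)) / L := by
    have hdf : |f k - f m| ≤ K₁ * (B / L) := by
      rw [← Real.dist_eq]
      refine (hfK₁.dist_le_mul k m).trans (mul_le_mul_of_nonneg_left ?_ K₁.2)
      rwa [Real.dist_eq, abs_sub_comm]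
    rw [abs_mul, abs_div, abs_of_pos hL, mul_div_assoc']
    gcongr
    simpa using (hf k).le_of_lipschitz hfK₁
  have hsplit : f m - (f k - f' k * f k / L)
      = (f m - f k - f' k * (m - k)) + f' k * ((f k - f m) / L) := by
    rw [show m - k = -(f m / L) by linear_combination hm]; ring
  calc |f m - (f k - f' k * f k / L)|
      ≤ |f m - f k - f' k * (m - k)| + |f' k * ((f k - f m) / L)| := hsplit ▸ abs_add_le _ _
    _ ≤ K * (B / L) ^ 2 + K₁ * (K₁ * (B / L)) / L := add_le_add htaylor hcorrection
    _ = (K₁ ^ 2 * B + K * B ^ 2) / L ^ 2 := by field_simp; ring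

theorem exists_forall_abs_expansion_le (hf : ∀ x, HasDerivAt f (f' x) x)
    (hfK₁ : LipschitzWith K₁ f) (hf' : LipschitzWith K f') (hB : ∀ x, |f x| ≤ B)
    {η : ℝ} (hη : 0 < η) :
    ∃ L₀ : ℝ, 0 < L₀ ∧ ∀ L : ℝ, L₀ ≤ L → ∀ k m : ℝ, m = k - f m / L →
      |f m - (f k - f' k * f k / L)| ≤ η / L := by
  set C := K₁ ^ 2 * B + K * B ^ 2
  have hC : 0 ≤ C := by
    have : 0 ≤ B := (abs_nonneg _).trans (hB 0)
    positivity
  refine ⟨C / η + 1, by positivity, fun L hL k m hm => ?_⟩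
  have hL0 : 0 < L := by linarith [div_nonneg hC hη.le]
  have hCL : C ≤ η * L := by
    rw [div_add_one hη.ne', div_le_iff₀ hη] at hL
    nlinarith
  calc |f m - (f k - f' k * f k / L)| ≤ C / L ^ 2 :=
        abs_expansion_le_of_eq_sub_div hf hfK₁ hf' hB hL0 hm
    _ ≤ η * L / L ^ 2 := by gcongr
    _ = η / L := by field_simp

end FixedPointExpansion

theorem lipschitzWith_arctan : LipschitzWith 1 arctan :=
  lipschitzWith_of_nnnorm_deriv_le differentiable_arctan fun x => by
    rw [← NNReal.coe_le_coe, coe_nnnorm, Real.deriv_arctan, Real.norm_eq_abs,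
      abs_of_pos (by positivity), NNReal.coe_one, div_le_one (by positivity)]
    nlinarith [sq_nonneg x]

theorem lipschitzWith_inv_one_add_sq : LipschitzWith 1 fun x : ℝ => (1 + x ^ 2)⁻¹ :=
  LipschitzWith.of_dist_le_mul fun a b => by
    have hab : |a + b| ≤ (1 + a ^ 2) * (1 + b ^ 2) := abs_le.2 ⟨by
      nlinarith [sq_nonneg (a + 1), sq_nonneg (b + 1), sq_nonneg (a * b)], by
      nlinarith [sq_nonneg (a - 1), sq_nonneg (b - 1), sq_nonneg (a * b)]⟩
    have hpos : 0 < (1 + a ^ 2) * (1 + b ^ 2) := by positivity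
    have heq : (1 + a ^ 2)⁻¹ - (1 + b ^ 2)⁻¹
        = (b - a) * (a + b) / ((1 + a ^ 2) * (1 + b ^ 2)) := by
      field_simp; ring
    rw [Real.dist_eq, Real.dist_eq, NNReal.coe_one, one_mul, heq, abs_div, abs_mul,
      abs_of_pos hpos, div_le_iff₀ hpos, abs_sub_comm]
    gcongr

section AffineArctan

variable (a s c : ℝ)

theorem hasDerivAt_add_mul_arctan (k : ℝ) :
    HasDerivAt (fun k => a + s * arctan (c * k)) (s * c * (1 + (c * k) ^ 2)⁻¹) k := by
  rw [show s * c * (1 + (c * k) ^ 2)⁻¹ = s * (1 / (1 + (c * k) ^ 2) * (c * 1)) by ring]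
  exact (((hasDerivAt_id' k).const_mul c).arctan.const_mul s).const_add a

theorem abs_add_mul_arctan_le (k : ℝ) : |a + s * arctan (c * k)| ≤ |a| + |s| * (π / 2) := by
  have harctan : |arctan (c * k)| ≤ π / 2 :=
    abs_le.2 ⟨(neg_pi_div_two_lt_arctan _).le, (arctan_lt_pi_div_two _).le⟩
  calc |a + s * arctan (c * k)| ≤ |a| + |s| * |arctan (c * k)| := by
        rw [← abs_mul]; exact abs_add_le _ _
    _ ≤ |a| + |s| * (π / 2) := by gcongr

theorem lipschitzWith_add_mul_arctan :
    LipschitzWith (‖s‖₊ * ‖c‖₊) fun k => a + s * arctan (c * k) :=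
  LipschitzWith.of_dist_le_mul fun x y => by
    have := (lipschitzWith_smul s).comp (lipschitzWith_arctan.comp (lipschitzWith_smul c))
      |>.dist_le_mul x y
    simpa [dist_add_left] using this

theorem lipschitzWith_mul_inv_one_add_sq :
    LipschitzWith (‖s * c‖₊ * ‖c‖₊) fun k => s * c * (1 + (c * k) ^ 2)⁻¹ := by
  have := (lipschitzWith_smul (s * c)).comp
    (lipschitzWith_inv_one_add_sq.comp (lipschitzWith_smul c))
  simpa [Function.comp_def] using this

end AffineArctan

theorem phaseShift_eq_add_mul_arctan (α : ℝ) :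
    ∃ a s c : ℝ, phaseShift α = fun k => a + s * arctan (c * k) := by
  rcases lt_trichotomy α 0 with hα | rfl | hα
  · refine ⟨π, -1, (4 * π * |α|)⁻¹, funext fun k => ?_⟩
    simp only [phaseShift, if_neg hα.not_gt, if_neg hα.ne, div_eq_inv_mul]
    ring
  · exact ⟨π / 2, 0, 0, funext fun k => by simp [phaseShift]⟩
  · exact ⟨0, 1, (4 * π * α)⁻¹, funext fun k => by simp [phaseShift, hα, div_eq_inv_mul]⟩

theorem phaseShift_expansion_general (α ε : ℝ) :
    ∀ η : ℝ, 0 < η → ∃ L₀ : ℝ, 0 < L₀ ∧ ∀ L : ℝ, L₀ ≤ L → ∀ n : ℕ, ∀ μ : ℝ,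
      0 ≤ μ →
      ε ≤ (n : ℝ) * Real.pi / L →
      Real.sqrt μ = (n : ℝ) * Real.pi / L - phaseShift α (Real.sqrt μ) / L →
      |phaseShift α (Real.sqrt μ) -
        (phaseShift α ((n : ℝ) * Real.pi / L) -
          deriv (phaseShift α) ((n : ℝ) * Real.pi / L) *
            phaseShift α ((n : ℝ) * Real.pi / L) / L)| ≤ η / L := by
  intro η hη
  obtain ⟨a, s, c, hδ⟩ := phaseShift_eq_add_mul_arctan α
  have hderiv := hasDerivAt_add_mul_arctan a s c
  obtain ⟨L₀, hL₀, hexpansion⟩ := exists_forall_abs_expansion_le hderiv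
    (lipschitzWith_add_mul_arctan a s c) (lipschitzWith_mul_inv_one_add_sq s c)
    (abs_add_mul_arctan_le a s c) hη
  refine ⟨L₀, hL₀, fun L hL n μ _ _ hroot => ?_⟩
  rw [hδ] at hroot ⊢
  rw [(hderiv _).deriv]
  exact hexpansion L hL _ _ hroot

/-- Expansion of the phase shift (Lemma `prod:le1` (iii)): if
`√μ_n = √λ_n − δ_α(√μ_n)/L` with `λ_n = (nπ/L)²`, then
`δ_α(√μ_n) = δ_α(√λ_n) − δ_α'(√λ_n) δ_α(√λ_n)/L + o(1/L)` as `L → ∞`,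
uniformly over `n` with `√λ_n = nπ/L` bounded below by `ε > 0`. -/
theorem phaseShift_expansion (α ε : ℝ) (hε : 0 < ε) :
    ∀ η : ℝ, 0 < η → ∃ L₀ : ℝ, 0 < L₀ ∧ ∀ L : ℝ, L₀ ≤ L → ∀ n : ℕ, ∀ μ : ℝ,
      0 ≤ μ →
      ε ≤ (n : ℝ) * Real.pi / L →
      Real.sqrt μ = (n : ℝ) * Real.pi / L - phaseShift α (Real.sqrt μ) / L →
      |phaseShift α (Real.sqrt μ) -
        (phaseShift α ((n : ℝ) * Real.pi / L) -
          deriv (phaseShift α) ((n : ℝ) * Real.pi / L) *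
            phaseShift α ((n : ℝ) * Real.pi / L) / L)| ≤ η / L :=
  phaseShift_expansion_general α ε
end
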